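/- arXiv:1407.3940 — 2 statements merged into one kernel-verified Lean document; each statement's English description precedes it below -/
import Mathlib

section
/- Let σ² > 0, ν² > 0, p ≥ 1, and |ρ| < 1. Let Λ be the (p+2)×(p+2) symmetric block matrix Λ = [[L, Kᵗ],[K, H]] where L = (σ²+ν²)I_{p+1}, K = (K₀, K₁, ..., K_p) with K₀ = ν² and K_k = -(σ²+ν²)θ_k - σ²ρ^k for 1 ≤ k ≤ p, and H = ν² + σ²∑_{k=1}^p (θ_k+ρ^k)² + ν²∑_{k=1}^p θ_k² + σ²ρ^{2(p+1)}/(1-ρ²). Then the Schur complement of L in Λ equals S = H - ‖K‖²/(σ²+ν²) = σ²(ν² + σ²ρ^{2(p+1)})/((1-ρ²)(σ²+ν²)). -/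
open Finset

lemma geom_aux (x : ℝ) (n : ℕ) :
    (1 - x) * ∑ k : Fin n, x ^ ((k : ℕ) + 1) = x - x ^ (n + 1) := by
  induction n with
  | zero => simp
  | succ n ih =>
    rw [Fin.sum_univ_castSucc]
    simp only [Fin.coe_castSucc, Fin.val_last]
    linear_combination ih

/-- The Schur complement of the block `L = (σ²+ν²) I_{p+1}` in the limit matrix `Λ`
equals `σ²(ν² + σ²ρ^{2(p+1)})/((1-ρ²)(σ²+ν²))`. -/
theorem durbin_watson_schur_complement
    (p : ℕ) (hp : 1 ≤ p) (σ2 ν2 ρ : ℝ) (hσ : 0 < σ2) (hν : 0 < ν2) (hρ : |ρ| < 1)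
    (θ : Fin p → ℝ)
    (K : Fin (p + 1) → ℝ)
    (hK : ∀ k : Fin (p + 1), K k =
      if h : (k : ℕ) = 0 then ν2
      else -(σ2 + ν2) * θ ⟨(k : ℕ) - 1, by have := k.isLt; omega⟩ - σ2 * ρ ^ (k : ℕ))
    (H : ℝ)
    (hH : H = ν2 + σ2 * ∑ k : Fin p, (θ k + ρ ^ ((k : ℕ) + 1)) ^ 2
      + ν2 * ∑ k : Fin p, (θ k) ^ 2 + σ2 * ρ ^ (2 * (p + 1)) / (1 - ρ ^ 2)) :
    H - (∑ k : Fin (p + 1), (K k) ^ 2) / (σ2 + ν2)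
      = σ2 * (ν2 + σ2 * ρ ^ (2 * (p + 1))) / ((1 - ρ ^ 2) * (σ2 + ν2)) := by
  have hs : (0:ℝ) < σ2 + ν2 := by linarith
  have hρ2 : ρ ^ 2 < 1 := by
    have := abs_lt.mp hρ; nlinarith
  have h1ρ : (0:ℝ) < 1 - ρ ^ 2 := by linarith
  -- abbreviations
  set s1 := ∑ k : Fin p, (θ k) ^ 2 with hs1
  set s2 := ∑ k : Fin p, θ k * ρ ^ ((k : ℕ) + 1) with hs2
  set G := ∑ k : Fin p, (ρ ^ 2) ^ ((k : ℕ) + 1) with hGdef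
  have hG : (1 - ρ ^ 2) * G = ρ ^ 2 - (ρ ^ 2) ^ (p + 1) := geom_aux (ρ ^ 2) p
  -- expand sum of K²
  have hKsum : ∑ k : Fin (p + 1), (K k) ^ 2
      = ν2 ^ 2 + (σ2 + ν2) ^ 2 * s1 + 2 * (σ2 + ν2) * σ2 * s2 + σ2 ^ 2 * G := by
    rw [Fin.sum_univ_succ]
    have h0 : K 0 = ν2 := by rw [hK 0]; simp
    have hsucc : ∀ i : Fin p, K i.succ = -(σ2 + ν2) * θ i - σ2 * ρ ^ ((i : ℕ) + 1) := by
      intro i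
      rw [hK i.succ]
      have : ((i.succ : Fin (p+1)) : ℕ) = (i : ℕ) + 1 := rfl
      rw [dif_neg (by omega)]
      congr 1
    rw [h0]
    have : ∑ i : Fin p, (K i.succ) ^ 2
        = (σ2 + ν2) ^ 2 * s1 + 2 * (σ2 + ν2) * σ2 * s2 + σ2 ^ 2 * G := by
      rw [hs1, hs2, hGdef, Finset.mul_sum, Finset.mul_sum, Finset.mul_sum,
        ← Finset.sum_add_distrib, ← Finset.sum_add_distrib]
      refine Finset.sum_congr rfl fun i _ => ?_
      rw [hsucc i]; ring
    rw [this]; ring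
  -- expand H sum
  have hsq : ∑ k : Fin p, (θ k + ρ ^ ((k : ℕ) + 1)) ^ 2 = s1 + 2 * s2 + G := by
    have h : ∀ i : Fin p, (θ i + ρ ^ ((i : ℕ) + 1)) ^ 2
        = θ i ^ 2 + 2 * (θ i * ρ ^ ((i : ℕ) + 1)) + (ρ ^ 2) ^ ((i : ℕ) + 1) := fun i => by ring
    simp_rw [h]
    rw [Finset.sum_add_distrib, Finset.sum_add_distrib, ← Finset.mul_sum, hs1, hs2, hGdef]
  have hpow : ρ ^ (2 * (p + 1)) = (ρ ^ 2) ^ (p + 1) := by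
    rw [← pow_mul]
  rw [hH, hKsum, hsq, hpow]
  field_simp
  nlinarith [hG, sq_nonneg ρ, mul_pos hs h1ρ]
end

section
/- For p ≥ 1, σ² > 0, ν² > 0 and |ρ| < 1, the quantity 4 - (4p+3)ρ^{2p} + 4pρ^{2(p+1)} - ρ^{2(2p+1)} appearing in the asymptotic variance formula is nonnegative; in fact it is strictly positive for |ρ| < 1. -/
lemma dw_aux (p : ℕ) (hp : 1 ≤ p) (x : ℝ) (hx0 : 0 ≤ x) (hx1 : x < 1) :
    0 < 4 - (4 * p + 3 : ℝ) * x ^ p + 4 * p * x ^ (p + 1) - x ^ (2 * p + 1) := by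
  rcases eq_or_lt_of_le hx0 with h0 | h0
  · have hxp : x ^ p = 0 := by
      rw [← h0]; exact zero_pow (by omega)
    have hxp1 : x ^ (p + 1) = 0 := by
      rw [← h0]; exact zero_pow (by omega)
    have hxp2 : x ^ (2 * p + 1) = 0 := by
      rw [← h0]; exact zero_pow (by omega)
    rw [hxp, hxp1, hxp2]; norm_num
  · set S1 := ∑ k ∈ Finset.range p, x ^ k with hS1def
    set S2 := ∑ k ∈ Finset.range (p + 1), x ^ k with hS2def
    have hS1 : (1 - x) * S1 = 1 - x ^ p := by
      have h := geom_sum_mul x p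
      calc (1 - x) * S1 = -(S1 * (x - 1)) := by ring
        _ = -(x ^ p - 1) := by rw [hS1def, h]
        _ = 1 - x ^ p := by ring
    have hS2 : (1 - x) * S2 = 1 - x ^ (p + 1) := by
      have h := geom_sum_mul x (p + 1)
      calc (1 - x) * S2 = -(S2 * (x - 1)) := by ring
        _ = -(x ^ (p + 1) - 1) := by rw [hS2def, h]
        _ = 1 - x ^ (p + 1) := by ring
    have key : 4 - (4 * p + 3 : ℝ) * x ^ p + 4 * p * x ^ (p + 1) - x ^ (2 * p + 1)
        = (1 - x) * (4 * S1 + x ^ p * S2 - 4 * p * x ^ p) := by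
      have e : x ^ (2 * p + 1) = x ^ p * x ^ (p + 1) := by ring
      calc 4 - (4 * p + 3 : ℝ) * x ^ p + 4 * p * x ^ (p + 1) - x ^ (2 * p + 1)
          = 4 * (1 - x ^ p) + x ^ p * (1 - x ^ (p + 1))
            - 4 * p * (x ^ p - x ^ (p + 1)) := by rw [e]; ring
        _ = 4 * ((1 - x) * S1) + x ^ p * ((1 - x) * S2)
            - 4 * p * (x ^ p - x ^ (p + 1)) := by rw [hS1, hS2]
        _ = (1 - x) * (4 * S1 + x ^ p * S2 - 4 * p * x ^ p) := by ring
    rw [key]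
    have hsum1 : (p : ℝ) * x ^ p ≤ S1 := by
      have h : ∀ k ∈ Finset.range p, x ^ p ≤ x ^ k := fun k hk =>
        pow_le_pow_of_le_one hx0 hx1.le (Finset.mem_range.mp hk).le
      calc (p : ℝ) * x ^ p = ∑ _k ∈ Finset.range p, x ^ p := by
            rw [Finset.sum_const, Finset.card_range, nsmul_eq_mul]
        _ ≤ S1 := Finset.sum_le_sum h
    have hS2ge : (1 : ℝ) ≤ S2 := by
      have h0mem : 0 ∈ Finset.range (p + 1) := Finset.mem_range.mpr (by omega)
      have := Finset.single_le_sum (f := fun k => x ^ k)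
        (fun k _ => pow_nonneg hx0 k) h0mem
      simpa using this
    have hxp : 0 < x ^ p := pow_pos h0 p
    have hbracket : 0 < 4 * S1 + x ^ p * S2 - 4 * p * x ^ p := by
      nlinarith [hxp, hsum1, hS2ge]
    exact mul_pos (by linarith) hbracket

/-- The factor `4 - (4p+3)ρ^{2p} + 4pρ^{2(p+1)} - ρ^{2(2p+1)}` appearing in the
asymptotic variance `τ²` is strictly positive for `|ρ| < 1`. -/
theorem durbin_watson_variance_factor_pos
    (p : ℕ) (hp : 1 ≤ p) (σ2 ν2 : ℝ) (hσ : 0 < σ2) (hν : 0 < ν2)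
    (ρ : ℝ) (hρ : |ρ| < 1) :
    0 < 4 - (4 * p + 3 : ℝ) * ρ ^ (2 * p) + 4 * p * ρ ^ (2 * (p + 1))
      - ρ ^ (2 * (2 * p + 1)) := by
  have hx0 : 0 ≤ ρ ^ 2 := sq_nonneg ρ
  have hx1 : ρ ^ 2 < 1 := by
    have := (sq_lt_one_iff_abs_lt_one ρ).mpr hρ
    simpa using this
  have h := dw_aux p hp (ρ ^ 2) hx0 hx1
  have e1 : ρ ^ (2 * p) = (ρ ^ 2) ^ p := by rw [pow_mul]
  have e2 : ρ ^ (2 * (p + 1)) = (ρ ^ 2) ^ (p + 1) := by rw [pow_mul]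
  have e3 : ρ ^ (2 * (2 * p + 1)) = (ρ ^ 2) ^ (2 * p + 1) := by rw [pow_mul]
  rw [e1, e2, e3]
  exact h
end
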